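/- arXiv:0708.0245 — 5 statements merged into one kernel-verified Lean document; each statement's English description precedes it below -/
import Mathlib

section
/- Let Λ be a row-finite, locally convex k-graph. For every x ∈ Λ^{≤∞} and m ≤ n ∈ ℕ^k: (i) (m − m∧d(x)) ∧ d(σ^{m∧d(x)}(x)) = 0, and (ii) (x;(m,n)) ≈ (σ^{m∧d(x)}(x); (m − m∧d(x), n − m∧d(x))). Consequently, every element (x;(m,n)) of P_Λ is ≈-equivalent to an element of the form (y;(p, p + (n−m))) with y ∈ Λ^{≤∞}, p ∈ ℕ^k and p ∧ d(y) = 0. -/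
open scoped ENat

/-- `q ≤ m` coordinatewise, where `q ∈ ℕ^k` and `m ∈ (ℕ ∪ {∞})^k`. -/
def leDeg (k : ℕ) (q : Fin k → ℕ) (m : Fin k → ℕ∞) : Prop :=
  ∀ i, (q i : ℕ∞) ≤ m i

/-- The coordinatewise minimum `m ∧ d` of `m ∈ ℕ^k` and `d ∈ (ℕ ∪ {∞})^k`,
viewed as an element of `ℕ^k`. -/
noncomputable def wedge {k : ℕ} (m : Fin k → ℕ) (dx : Fin k → ℕ∞) : Fin k → ℕ :=
  fun i => ((m i : ℕ∞) ⊓ dx i).toNat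

lemma wedge_coe {k : ℕ} (m : Fin k → ℕ) (dx : Fin k → ℕ∞) (i : Fin k) :
    ((wedge m dx i : ℕ)  : ℕ∞) = (m i : ℕ∞) ⊓ dx i := by
  have h : (m i : ℕ∞) ⊓ dx i ≠ ⊤ :=
    (inf_le_left.trans_lt (ENat.coe_lt_top (m i))).ne
  simpa [wedge] using ENat.coe_toNat h

lemma wedge_leDeg {k : ℕ} (m : Fin k → ℕ) (dx : Fin k → ℕ∞) :
    leDeg k (wedge m dx) dx := by
  intro i
  rw [wedge_coe]
  exact inf_le_right

/-- The data of a countable-free small category with a degree map: the underlying data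
of a `k`-graph. -/
structure KGraphData (k : ℕ) where
  Obj : Type
  Mor : Type
  r : Mor → Obj
  s : Mor → Obj
  idm : Obj → Mor
  comp : Mor → Mor → Mor
  d : Mor → Fin k → ℕ

/-- The axioms making `Λ` a `k`-graph: a small category together with a degree functor
`d : Λ → ℕ^k` satisfying the factorisation property. (Composition `comp f g` is only
constrained when `s f = r g`.) -/
structure IsKGraph {k : ℕ} (Λ : KGraphData k) : Prop where
  r_id : ∀ v, Λ.r (Λ.idm v) = v
  s_id : ∀ v, Λ.s (Λ.idm v) = v
  id_comp : ∀ f, Λ.comp (Λ.idm (Λ.r f)) f = f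
  comp_id : ∀ f, Λ.comp f (Λ.idm (Λ.s f)) = f
  r_comp : ∀ f g, Λ.s f = Λ.r g → Λ.r (Λ.comp f g) = Λ.r f
  s_comp : ∀ f g, Λ.s f = Λ.r g → Λ.s (Λ.comp f g) = Λ.s g
  assoc : ∀ f g h, Λ.s f = Λ.r g → Λ.s g = Λ.r h →
    Λ.comp (Λ.comp f g) h = Λ.comp f (Λ.comp g h)
  d_id : ∀ v, Λ.d (Λ.idm v) = 0
  d_comp : ∀ f g, Λ.s f = Λ.r g → Λ.d (Λ.comp f g) = Λ.d f + Λ.d g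
  factor : ∀ (f : Λ.Mor) (m n : Fin k → ℕ), Λ.d f = m + n →
    ∃! p : Λ.Mor × Λ.Mor, Λ.s p.1 = Λ.r p.2 ∧ Λ.d p.1 = m ∧ Λ.d p.2 = n ∧
      Λ.comp p.1 p.2 = f

/-- `Λ` is row-finite: `vΛ^n` is finite for every vertex `v` and degree `n`. -/
def RowFinite {k : ℕ} (Λ : KGraphData k) : Prop :=
  ∀ (v : Λ.Obj) (n : Fin k → ℕ), {f : Λ.Mor | Λ.r f = v ∧ Λ.d f = n}.Finite

/-- `Λ` is locally convex. -/
def LocallyConvex {k : ℕ} (Λ : KGraphData k) : Prop :=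
  ∀ (i j : Fin k), i ≠ j → ∀ lam mu : Λ.Mor,
    Λ.d lam = Pi.single i 1 → Λ.d mu = Pi.single j 1 → Λ.r lam = Λ.r mu →
    (∃ f, Λ.r f = Λ.s lam ∧ Λ.d f = Pi.single j 1) ∧
    (∃ g, Λ.r g = Λ.s mu ∧ Λ.d g = Pi.single i 1)

/-- A boundary path of `Λ`: a degree-preserving functor `x : Ω_{k,m} → Λ`
(encoded by its vertex map `vert` and segment map `seg`, constrained on
pairs `p ≤ q ≤ m = deg`) such that whenever `p ≤ m` and `p i = m i`,
`x(p)Λ^{e_i} = ∅`. -/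
structure BPath (k : ℕ) (Λ : KGraphData k) where
  deg : Fin k → ℕ∞
  vert : (Fin k → ℕ) → Λ.Obj
  seg : (Fin k → ℕ) → (Fin k → ℕ) → Λ.Mor
  seg_r : ∀ p q, p ≤ q → leDeg k q deg → Λ.r (seg p q) = vert p
  seg_s : ∀ p q, p ≤ q → leDeg k q deg → Λ.s (seg p q) = vert q
  seg_deg : ∀ p q, p ≤ q → leDeg k q deg → Λ.d (seg p q) = q - p
  seg_id : ∀ p, leDeg k p deg → seg p p = Λ.idm (vert p)
  seg_comp : ∀ p q t, p ≤ q → q ≤ t → leDeg k t deg →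
    Λ.comp (seg p q) (seg q t) = seg p t
  boundary : ∀ (p : Fin k → ℕ) (i : Fin k), leDeg k p deg → (p i : ℕ∞) = deg i →
    ∀ e : Λ.Mor, Λ.r e = vert p → Λ.d e ≠ Pi.single i 1

/-- Equality of boundary paths as functors: same degree and the same segments on
the common (valid) domain. -/
def BPath.eqv {k : ℕ} {Λ : KGraphData k} (x y : BPath k Λ) : Prop :=
  x.deg = y.deg ∧ ∀ p q, p ≤ q → leDeg k q x.deg → x.seg p q = y.seg p q

lemma leDeg_add {k : ℕ} {n q : Fin k → ℕ} {D : Fin k → ℕ∞}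
    (hn : leDeg k n D) (hq : leDeg k q (fun i => D i - (n i : ℕ∞))) :
    leDeg k (q + n) D := by
  intro i
  have hqi := hq i
  have hni := hn i
  by_cases hD : D i = ⊤
  · rw [hD]; exact le_top
  · lift D i to ℕ using hD with a ha
    rw [show ((a : ℕ∞) - (n i : ℕ∞)) = ((a - n i : ℕ) : ℕ∞) by
      exact_mod_cast (ENat.coe_sub a (n i)).symm] at hqi
    have h1 : q i ≤ a - n i := by exact_mod_cast hqi
    have h2 : n i ≤ a := by exact_mod_cast hni
    have h3 : q i + n i ≤ a := by omega
    show ((q i + n i : ℕ) : ℕ∞) ≤ (a : ℕ∞)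
    exact_mod_cast h3

/-- The shift `σ^n(x)` of a boundary path `x` by `n ≤ d(x)`. -/
def BPath.shift {k : ℕ} {Λ : KGraphData k} (x : BPath k Λ) (n : Fin k → ℕ)
    (h : leDeg k n x.deg) : BPath k Λ where
  deg := fun i => x.deg i - (n i : ℕ∞)
  vert := fun p => x.vert (p + n)
  seg := fun p q => x.seg (p + n) (q + n)
  seg_r := fun p q hpq hq =>
    x.seg_r (p + n) (q + n) (add_le_add_left hpq n) (leDeg_add h hq)
  seg_s := fun p q hpq hq =>
    x.seg_s (p + n) (q + n) (add_le_add_left hpq n) (leDeg_add h hq)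
  seg_deg := by
    intro p q hpq hq
    rw [x.seg_deg (p + n) (q + n) (add_le_add_left hpq n) (leDeg_add h hq)]
    funext i
    simp only [Pi.sub_apply, Pi.add_apply]
    omega
  seg_id := by
    intro p hp
    show x.seg (p + n) (p + n) = _
    rw [x.seg_id (p + n) (leDeg_add h hp)]
  seg_comp := fun p q t hpq hqt ht =>
    x.seg_comp (p + n) (q + n) (t + n) (add_le_add_left hpq n)
      (add_le_add_left hqt n) (leDeg_add h ht)
  boundary := by
    intro p i hp hpi e he
    refine x.boundary (p + n) i (leDeg_add h hp) ?_ e he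
    have hni := h i
    have hpi' : (p i : ℕ∞) = x.deg i - (n i : ℕ∞) := hpi
    clear hpi
    by_cases hD : x.deg i = ⊤
    · rw [hD] at hpi'
      simp at hpi'
    · lift x.deg i to ℕ using hD with a ha
      rw [show ((a : ℕ∞) - (n i : ℕ∞)) = ((a - n i : ℕ) : ℕ∞) by
        exact_mod_cast (ENat.coe_sub a (n i)).symm] at hpi'
      have h1 : p i = a - n i := by exact_mod_cast hpi'
      have h2 : n i ≤ a := by exact_mod_cast hni
      have h3 : p i + n i = a := by omega
      show ((p i + n i : ℕ) : ℕ∞) = (a : ℕ∞)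
      exact_mod_cast h3

/-- The relation `∼` on `V_Λ = Λ^{≤∞} × ℕ^k`. -/
def VRel {k : ℕ} {Λ : KGraphData k} (a b : BPath k Λ × (Fin k → ℕ)) : Prop :=
  a.1.vert (wedge a.2 a.1.deg) = b.1.vert (wedge b.2 b.1.deg) ∧
  a.2 - wedge a.2 a.1.deg = b.2 - wedge b.2 b.1.deg

/-- The relation `≈` on `P_Λ = {(x;(m,n)) : x ∈ Λ^{≤∞}, m ≤ n}`
(as a relation on all triples). -/
def PRel {k : ℕ} {Λ : KGraphData k}
    (a b : BPath k Λ × (Fin k → ℕ) × (Fin k → ℕ)) : Prop :=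
  a.1.seg (wedge a.2.1 a.1.deg) (wedge a.2.2 a.1.deg) =
    b.1.seg (wedge b.2.1 b.1.deg) (wedge b.2.2 b.1.deg) ∧
  a.2.1 - wedge a.2.1 a.1.deg = b.2.1 - wedge b.2.1 b.1.deg ∧
  a.2.2 - a.2.1 = b.2.2 - b.2.1

/-- `z` is the concatenation `λ x` of the morphism `lam` with the boundary path `x`:
`z` has degree `d(lam) + d(x)`, `z(0, d lam) = lam`, and
`z(d lam, d lam + p) = x(0, p)` for all `p ≤ d(x)`. -/
def IsConcat {k : ℕ} (Λ : KGraphData k) (lam : Λ.Mor) (x z : BPath k Λ) : Prop :=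
  z.deg = (fun i => (Λ.d lam i : ℕ∞) + x.deg i) ∧
  z.seg 0 (Λ.d lam) = lam ∧
  ∀ p, leDeg k p x.deg → z.seg (Λ.d lam) (Λ.d lam + p) = x.seg 0 p

/-- `Λ` has local periodicity `m, n` at the vertex `v`: for every boundary path
`x ∈ vΛ^{≤∞}`, `m − m∧d(x) = n − n∧d(x)` and `σ^{m∧d(x)}(x) = σ^{n∧d(x)}(x)`. -/
def LocalPeriodicity {k : ℕ} (Λ : KGraphData k) (m n : Fin k → ℕ) (v : Λ.Obj) : Prop :=
  ∀ x : BPath k Λ, x.vert 0 = v →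
    (m - wedge m x.deg = n - wedge n x.deg) ∧
    BPath.eqv (x.shift (wedge m x.deg) (wedge_leDeg m x.deg))
      (x.shift (wedge n x.deg) (wedge_leDeg n x.deg))

/-! Shifting a boundary path by `a ≤ m ∧ d(x)` translates both wedged endpoints by `a`, because
`(n − a) ∧ (d − a) + a = n ∧ d` coordinatewise; hence it picks out the same segment. For
`a = m ∧ d(x)`, in each coordinate either `m − a` or `d(x) − a` vanishes. -/

theorem ENat.toNat_inf_sub_add (a n : ℕ) (d : ℕ∞) (han : a ≤ n) (had : (a : ℕ∞) ≤ d) :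
    (((n - a : ℕ) : ℕ∞) ⊓ (d - a)).toNat + a = ((n : ℕ∞) ⊓ d).toNat := by
  induction d using ENat.recTopCoe with
  | top => simp only [ENat.top_sub_natCast, inf_top_eq, ENat.toNat_natCast]; omega
  | coe d =>
    have : a ≤ d := by exact_mod_cast had
    rw [← ENat.natCast_sub, ← Nat.mono_cast.map_inf, ← Nat.mono_cast.map_inf]
    simp only [ENat.toNat_natCast]
    omega

lemma wedge_le {k : ℕ} (m : Fin k → ℕ) (dx : Fin k → ℕ∞) : wedge m dx ≤ m := fun i =>
  ENat.natCast_le_natCast.mp ((wedge_coe m dx i).trans_le inf_le_left)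

lemma wedge_sub_add {k : ℕ} {a n : Fin k → ℕ} (dx : Fin k → ℕ∞) (han : a ≤ n)
    (had : leDeg k a dx) : wedge (n - a) (fun i => dx i - a i) + a = wedge n dx :=
  funext fun i => ENat.toNat_inf_sub_add (a i) (n i) (dx i) (han i) (had i)

namespace BPath

variable {k : ℕ} {Λ : KGraphData k}

lemma wedge_shift_deg_add (x : BPath k Λ) {a n : Fin k → ℕ} (h : leDeg k a x.deg)
    (han : a ≤ n) : wedge (n - a) (x.shift a h).deg + a = wedge n x.deg :=
  wedge_sub_add x.deg han h

lemma wedge_sub_wedge_shift_deg (x : BPath k Λ) (m : Fin k → ℕ) :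
    wedge (m - wedge m x.deg) (x.shift (wedge m x.deg) (wedge_leDeg m x.deg)).deg = 0 :=
  add_eq_right.mp (x.wedge_shift_deg_add _ (wedge_le m x.deg))

lemma prel_shift (x : BPath k Λ) {a m n : Fin k → ℕ} (h : leDeg k a x.deg) (ham : a ≤ m)
    (hmn : m ≤ n) : PRel (x, m, n) (x.shift a h, m - a, n - a) := by
  have hm := x.wedge_shift_deg_add h ham
  have hn := x.wedge_shift_deg_add h (ham.trans hmn)
  refine ⟨?_, funext fun i => ?_, funext fun i => ?_⟩
  · show x.seg _ _ = x.seg (wedge (m - a) _ + a) (wedge (n - a) _ + a)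
    rw [hm, hn]
  · have := congrFun hm i
    simp only [Pi.sub_apply, Pi.add_apply] at this ⊢
    omega
  · have hai : a i ≤ m i := ham i
    have hmni : m i ≤ n i := hmn i
    simp only [Pi.sub_apply]
    omega

end BPath

theorem prel_normal_form_general (k : ℕ) (Λ : KGraphData k)
    (x : BPath k Λ) (m n : Fin k → ℕ) (hmn : m ≤ n) :
    (wedge (m - wedge m x.deg) (x.shift (wedge m x.deg) (wedge_leDeg m x.deg)).deg = 0 ∧
      PRel (x, m, n)
        (x.shift (wedge m x.deg) (wedge_leDeg m x.deg),
          m - wedge m x.deg, n - wedge m x.deg)) ∧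
    ∀ (x' : BPath k Λ) (m' n' : Fin k → ℕ), m' ≤ n' →
      ∃ (y : BPath k Λ) (p : Fin k → ℕ), wedge p y.deg = 0 ∧
        PRel (x', m', n') (y, p, p + (n' - m')) := by
  refine ⟨⟨x.wedge_sub_wedge_shift_deg m, x.prel_shift _ (wedge_le m x.deg) hmn⟩,
    fun x' m' n' hmn' => ⟨_, _, x'.wedge_sub_wedge_shift_deg m', ?_⟩⟩
  have hend : m' - wedge m' x'.deg + (n' - m') = n' - wedge m' x'.deg := by
    funext i
    have hwi : wedge m' x'.deg i ≤ m' i := wedge_le m' x'.deg i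
    have hmni : m' i ≤ n' i := hmn' i
    simp only [Pi.sub_apply, Pi.add_apply]
    omega
  rw [hend]
  exact x'.prel_shift _ (wedge_le m' x'.deg) hmn'

/-- `(m − m∧d(x)) ∧ d(σ^{m∧d(x)}(x)) = 0`, and
`(x;(m,n)) ≈ (σ^{m∧d(x)}(x); (m − m∧d(x), n − m∧d(x)))`; consequently every
element of `P_Λ` is `≈`-equivalent to one of the form `(y;(p, p+(n−m)))` with
`p ∧ d(y) = 0`. -/
theorem prel_normal_form (k : ℕ) (hk : 1 ≤ k) (Λ : KGraphData k)
    (hΛ : IsKGraph Λ) (hrf : RowFinite Λ) (hlc : LocallyConvex Λ)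
    (x : BPath k Λ) (m n : Fin k → ℕ) (hmn : m ≤ n) :
    (wedge (m - wedge m x.deg) (x.shift (wedge m x.deg) (wedge_leDeg m x.deg)).deg = 0 ∧
      PRel (x, m, n)
        (x.shift (wedge m x.deg) (wedge_leDeg m x.deg),
          m - wedge m x.deg, n - wedge m x.deg)) ∧
    ∀ (x' : BPath k Λ) (m' n' : Fin k → ℕ), m' ≤ n' →
      ∃ (y : BPath k Λ) (p : Fin k → ℕ), wedge p y.deg = 0 ∧
        PRel (x', m', n') (y, p, p + (n' - m')) :=
  prel_normal_form_general k Λ x m n hmn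
end

section
/- Let Λ be a row-finite, locally convex k-graph and let v ∈ Λ^0. Suppose x ∈ vΛ^{≤∞} and p ∈ ℕ^k satisfy p ∧ d(x) = 0. Then for every z ∈ vΛ^{≤∞} we have p ∧ d(z) = 0 and (x;(0,p)) ≈ (z;(0,p)). -/
open scoped ENat

lemma leDeg_zero {k : ℕ} (D : Fin k → ℕ∞) : leDeg k 0 D :=
  fun _ => bot_le

lemma leDeg_single_one {k : ℕ} {D : Fin k → ℕ∞} {i : Fin k} (hi : D i ≠ 0) :
    leDeg k (Pi.single i 1) D := by
  intro j
  rcases eq_or_ne j i with rfl | hji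
  · simpa using Order.one_le_iff_ne_zero.mpr hi
  · simp [hji]

lemma wedge_zero_left {k : ℕ} (D : Fin k → ℕ∞) : wedge 0 D = 0 := by
  funext i
  simp [wedge]

lemma wedge_eq_zero_iff {k : ℕ} {p : Fin k → ℕ} {D : Fin k → ℕ∞} :
    wedge p D = 0 ↔ ∀ i, p i = 0 ∨ D i = 0 := by
  simp [funext_iff, wedge, ENat.toNat_eq_zero]

namespace BPath

variable {k : ℕ} {Λ : KGraphData k}

lemma no_edge_of_deg_eq_zero (x : BPath k Λ) {i : Fin k} (hi : x.deg i = 0)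
    (e : Λ.Mor) (he : Λ.r e = x.vert 0) : Λ.d e ≠ Pi.single i 1 :=
  x.boundary 0 i (leDeg_zero _) (by simp [hi]) e he

lemma deg_eq_zero_of_no_edge (z : BPath k Λ) {i : Fin k}
    (h : ∀ e : Λ.Mor, Λ.r e = z.vert 0 → Λ.d e ≠ Pi.single i 1) : z.deg i = 0 := by
  by_contra hi
  have hle := leDeg_single_one hi
  have hpos : (0 : Fin k → ℕ) ≤ Pi.single i 1 := fun _ => Nat.zero_le _
  exact h _ (z.seg_r 0 _ hpos hle) (by simpa using z.seg_deg 0 _ hpos hle)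

lemma deg_eq_zero_of_vert_zero_eq {x z : BPath k Λ} (hxz : x.vert 0 = z.vert 0) {i : Fin k}
    (hi : x.deg i = 0) : z.deg i = 0 :=
  z.deg_eq_zero_of_no_edge fun e he => x.no_edge_of_deg_eq_zero hi e (he.trans hxz.symm)

end BPath

theorem prel_vertex_const_general (k : ℕ) (Λ : KGraphData k)
    (v : Λ.Obj) (x : BPath k Λ) (hx : x.vert 0 = v) (p : Fin k → ℕ)
    (hp : wedge p x.deg = 0) :
    ∀ z : BPath k Λ, z.vert 0 = v →
      wedge p z.deg = 0 ∧ PRel (x, 0, p) (z, 0, p) := by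
  intro z hz
  have hpz : wedge p z.deg = 0 := wedge_eq_zero_iff.2 fun i =>
    (wedge_eq_zero_iff.1 hp i).imp_right (BPath.deg_eq_zero_of_vert_zero_eq (hx.trans hz.symm))
  refine ⟨hpz, ?_, by simp only [wedge_zero_left], rfl⟩
  change x.seg (wedge 0 x.deg) (wedge p x.deg) = z.seg (wedge 0 z.deg) (wedge p z.deg)
  rw [wedge_zero_left, wedge_zero_left, hp, hpz, x.seg_id 0 (leDeg_zero _),
    z.seg_id 0 (leDeg_zero _), hx, hz]

/-- If `x ∈ vΛ^{≤∞}` and `p ∧ d(x) = 0` then for every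
`z ∈ vΛ^{≤∞}` we have `p ∧ d(z) = 0` and `(x;(0,p)) ≈ (z;(0,p))`. -/
theorem prel_vertex_const (k : ℕ) (hk : 1 ≤ k) (Λ : KGraphData k)
    (hΛ : IsKGraph Λ) (hrf : RowFinite Λ) (hlc : LocallyConvex Λ)
    (v : Λ.Obj) (x : BPath k Λ) (hx : x.vert 0 = v) (p : Fin k → ℕ)
    (hp : wedge p x.deg = 0) :
    ∀ z : BPath k Λ, z.vert 0 = v →
      wedge p z.deg = 0 ∧ PRel (x, 0, p) (z, 0, p) :=
  prel_vertex_const_general k Λ v x hx p hp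
end

section
/- Let Λ be a row-finite, locally convex k-graph. Suppose x ∈ Λ^{≤∞} and p, m, n ∈ ℕ^k satisfy (x;(p+m, p+m+l)) ≈ (x;(p+n, p+n+l)) for all l ∈ ℕ^k (equivalently, σ^m([x;(p,∞)]) = σ^n([x;(p,∞)]) as infinite paths of the desourcification of Λ). Then for each i ∈ {1,…,k}, if m_i ≠ n_i then d(x)_i = ∞. -/
open scoped ENat

/-! If `d(x)_i = a < ∞`, take `l` with `l_i = a`. Both segments in (P1) then end at `a` in
direction `i`, so comparing their degrees gives `(s ∧ d(x))_i = (t ∧ d(x))_i` for the start points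
`s = p + m`, `t = p + n`; (P2) says that the excesses `s_i - (s ∧ d(x))_i` and `t_i - (t ∧ d(x))_i`
agree too, hence `s_i = t_i`. -/

lemma wedge_apply_of_eq_coe {k : ℕ} (q : Fin k → ℕ) {dx : Fin k → ℕ∞} {i : Fin k} {a : ℕ}
    (ha : dx i = a) : wedge q dx i = min (q i) a := by
  rw [wedge, ha, ← Nat.mono_cast.map_min, ENat.toNat_natCast]

lemma wedge_mono {k : ℕ} {q q' : Fin k → ℕ} (dx : Fin k → ℕ∞) (hq : q ≤ q') :
    wedge q dx ≤ wedge q' dx := fun j => by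
  have : ((wedge q dx j : ℕ) : ℕ∞) ≤ wedge q' dx j := by
    rw [wedge_coe, wedge_coe]
    exact inf_le_inf_right _ (by exact_mod_cast hq j)
  exact_mod_cast this

lemma BPath.d_seg_wedge {k : ℕ} {Λ : KGraphData k} (x : BPath k Λ) {q q' : Fin k → ℕ}
    (hq : q ≤ q') :
    Λ.d (x.seg (wedge q x.deg) (wedge q' x.deg)) = wedge q' x.deg - wedge q x.deg :=
  x.seg_deg _ _ (wedge_mono x.deg hq) (wedge_leDeg q' x.deg)

lemma PRel.start_eq_of_deg_eq_coe {k : ℕ} {Λ : KGraphData k} {x y : BPath k Λ}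
    {s t l : Fin k → ℕ} (hxy : PRel (x, s, s + l) (y, t, t + l)) {i : Fin k} {a : ℕ}
    (hx : x.deg i = a) (hy : y.deg i = a) (hl : a ≤ l i) : s i = t i := by
  obtain ⟨hseg, hexcess, -⟩ := hxy
  have hlen : Λ.d (x.seg (wedge s x.deg) (wedge (s + l) x.deg)) i =
      Λ.d (y.seg (wedge t y.deg) (wedge (t + l) y.deg)) i := congrFun (congrArg Λ.d hseg) i
  rw [x.d_seg_wedge le_self_add, y.d_seg_wedge le_self_add] at hlen
  have hexcess_i := congrFun hexcess i
  simp only [Pi.sub_apply, Pi.add_apply, wedge_apply_of_eq_coe _ hx,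
    wedge_apply_of_eq_coe _ hy] at hlen hexcess_i
  omega

theorem deg_top_of_periodic_general (k : ℕ) (Λ : KGraphData k)
    (x : BPath k Λ) (p m n : Fin k → ℕ)
    (h : ∀ l : Fin k → ℕ, PRel (x, p + m, p + m + l) (x, p + n, p + n + l)) :
    ∀ i : Fin k, m i ≠ n i → x.deg i = ⊤ := by
  intro i hmn
  by_contra hfin
  obtain ⟨a, ha⟩ := WithTop.ne_top_iff_exists.mp hfin
  have hstart := (h fun _ => a).start_eq_of_deg_eq_coe ha.symm ha.symm le_rfl
  simp only [Pi.add_apply] at hstart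
  omega

/-- If `σ^m([x;(p,∞)]) = σ^n([x;(p,∞)])`, i.e.
`(x;(p+m, p+m+l)) ≈ (x;(p+n, p+n+l))` for all `l`, then `d(x)_i = ∞`
whenever `m_i ≠ n_i`. -/
theorem deg_top_of_periodic (k : ℕ) (hk : 1 ≤ k) (Λ : KGraphData k)
    (hΛ : IsKGraph Λ) (hrf : RowFinite Λ) (hlc : LocallyConvex Λ)
    (x : BPath k Λ) (p m n : Fin k → ℕ)
    (h : ∀ l : Fin k → ℕ, PRel (x, p + m, p + m + l) (x, p + n, p + n + l)) :
    ∀ i : Fin k, m i ≠ n i → x.deg i = ⊤ :=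
  deg_top_of_periodic_general k Λ x p m n h
end

section
/- Let Λ be a row-finite, locally convex k-graph. Let y ∈ Λ^{≤∞} and q ∈ ℕ^k be such that y(q∧d(y))Λ^{e_i} = ∅ whenever d(y)_i < ∞. Then for every boundary path z ∈ y(q∧d(y))Λ^{≤∞}, the concatenation y' := y(0, q∧d(y)) z is a boundary path of Λ satisfying q ∧ d(y') = q ∧ d(y) (and hence (y';q) ~ (y;q)). -/
/-!
The path `y' = λz` with `λ = y(0, q ∧ d(y))` is assembled from the finite morphisms
`λ · z(0, t - d(λ))`, whose factorisations give its segments. It is a boundary path by local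
convexity: an edge of colour `i` at `y'(p)` with `p_i = d(y')_i` could be pushed along
`y'(p, p ∨ d(λ))`, which has no `i`-component, to the vertex `z(p - d(λ))` on the boundary of `z`.
The hypothesis on `y(q ∧ d(y))` forces `d(z)_i = 0` whenever `d(y)_i < ∞`, which gives
`q ∧ d(y') = q ∧ d(y)`.
-/

open scoped ENat

namespace KGraphData

variable {k : ℕ} (Λ : KGraphData k)

/-- `vΛ^{e_i} ≠ ∅`. -/
def HasEdge (v : Λ.Obj) (i : Fin k) : Prop :=
  ∃ e, Λ.r e = v ∧ Λ.d e = Pi.single i 1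

end KGraphData

lemma leDeg_of_le {k : ℕ} {p t : Fin k → ℕ} {D : Fin k → ℕ∞} (hpt : p ≤ t)
    (ht : leDeg k t D) : leDeg k p D :=
  fun i => (Nat.cast_le.mpr (hpt i)).trans (ht i)

lemma sup_tsub_right {k : ℕ} (t n : Fin k → ℕ) : (t ⊔ n) - n = t - n :=
  funext fun i => (Nat.sub_eq_max_sub (t i) (n i)).symm

lemma leDeg_sub_iff {k : ℕ} {T n : Fin k → ℕ} {X : Fin k → ℕ∞} :
    leDeg k (T - n) X ↔ leDeg k T (fun i => (n i : ℕ∞) + X i) := by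
  simp only [leDeg, Pi.sub_apply, ENat.natCast_sub, tsub_le_iff_left]

lemma wedge_add_eq_wedge {k : ℕ} (q : Fin k → ℕ) {D E : Fin k → ℕ∞}
    (hE : ∀ i, D i ≠ ⊤ → E i = 0) :
    wedge q (fun i => (wedge q D i : ℕ∞) + E i) = wedge q D := by
  funext i
  refine ENat.natCast_inj.mp ?_
  rw [wedge_coe, wedge_coe]
  by_cases hD : D i = ⊤
  · simp [hD]
  · simp [hE i hD]

namespace IsKGraph

variable {k : ℕ} {Λ : KGraphData k}

theorem eq_of_comp_eq (hΛ : IsKGraph Λ) {A B A' B' : Λ.Mor} (h : Λ.s A = Λ.r B)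
    (h' : Λ.s A' = Λ.r B') (hd : Λ.d A = Λ.d A') (hc : Λ.comp A B = Λ.comp A' B') :
    A = A' ∧ B = B' := by
  have hdB : Λ.d B' = Λ.d B := by
    have := (hΛ.d_comp _ _ h').symm.trans ((congrArg Λ.d hc).symm.trans (hΛ.d_comp _ _ h))
    rw [hd] at this
    exact add_left_cancel this
  have := (hΛ.factor (Λ.comp A B) (Λ.d A) (Λ.d B) (hΛ.d_comp _ _ h)).unique
    (y₁ := (A, B)) (y₂ := (A', B')) ⟨h, rfl, rfl, rfl⟩ ⟨h', hd.symm, hdB, hc.symm⟩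
  exact Prod.ext_iff.mp this

theorem eq_idm_of_d_eq_zero (hΛ : IsKGraph Λ) {f : Λ.Mor} (hf : Λ.d f = 0) :
    f = Λ.idm (Λ.r f) :=
  (hΛ.eq_of_comp_eq (hΛ.r_id _).symm (by rw [hΛ.s_id]) (by rw [hf, hΛ.d_id])
    ((hΛ.comp_id f).trans (hΛ.id_comp f).symm)).1

theorem s_eq_r_of_d_eq_zero (hΛ : IsKGraph Λ) {f : Λ.Mor} (hf : Λ.d f = 0) :
    Λ.s f = Λ.r f := by
  rw [hΛ.eq_idm_of_d_eq_zero hf, hΛ.s_id, hΛ.r_id]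

/-- Local convexity lets an edge of colour `i` be pushed along any path with no
`i`-coloured edges, one edge of another colour `j` at a time. -/
theorem hasEdge_s_of_hasEdge_r (hΛ : IsKGraph Λ) (hlc : LocallyConvex Λ) {i : Fin k}
    {μ : Λ.Mor} (hμ : Λ.d μ i = 0) (he : Λ.HasEdge (Λ.r μ) i) : Λ.HasEdge (Λ.s μ) i := by
  induction hN : ∑ j, Λ.d μ j generalizing μ with
  | zero =>
    have hd : Λ.d μ = 0 := funext fun j => Finset.sum_eq_zero_iff.mp hN j (Finset.mem_univ j)
    rwa [hΛ.s_eq_r_of_d_eq_zero hd]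
  | succ N ih =>
    obtain ⟨j, hj⟩ : ∃ j, Λ.d μ j ≠ 0 := by
      by_contra! h
      simp [h] at hN
    have hji : j ≠ i := by
      rintro rfl
      exact hj hμ
    have hle : Pi.single j 1 ≤ Λ.d μ := by
      intro l
      rcases eq_or_ne l j with rfl | hl
      · simpa [Nat.one_le_iff_ne_zero] using hj
      · simp [hl]
    obtain ⟨⟨ν, ρ⟩, ⟨hνρ, hdν, -, hμ_eq⟩, -⟩ :=
      hΛ.factor μ _ _ (add_tsub_cancel_of_le hle).symm
    subst hμ_eq
    have hd := hΛ.d_comp _ _ hνρ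
    obtain ⟨e, her, hed⟩ := he
    obtain ⟨⟨f, hfr, hfd⟩, -⟩ :=
      hlc j i hji ν e hdν hed (by rw [her, hΛ.r_comp _ _ hνρ])
    have hρi : Λ.d ρ i = 0 := by
      simpa [hd, hdν, Pi.single_apply, hji.symm] using hμ
    have hρN : ∑ l, Λ.d ρ l = N := by
      simp only [hd, hdν, Pi.add_apply, Finset.sum_add_distrib, Finset.sum_pi_single',
        Finset.mem_univ, if_true] at hN
      omega
    rw [hΛ.s_comp _ _ hνρ]
    exact ih hρi ⟨f, hfr.trans hνρ, hfd⟩ hρN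

open Classical in
/-- Junk value `(g, g)` unless `u ≤ d g`. -/
noncomputable def split (hΛ : IsKGraph Λ) (g : Λ.Mor) (u : Fin k → ℕ) : Λ.Mor × Λ.Mor :=
  if h : u ≤ Λ.d g then (hΛ.factor g u (Λ.d g - u) (add_tsub_cancel_of_le h).symm).choose
  else (g, g)

noncomputable def head (hΛ : IsKGraph Λ) (g : Λ.Mor) (u : Fin k → ℕ) : Λ.Mor :=
  (hΛ.split g u).1

noncomputable def tail (hΛ : IsKGraph Λ) (g : Λ.Mor) (u : Fin k → ℕ) : Λ.Mor :=
  (hΛ.split g u).2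

/-- The segment `g(u, v)` of `g`. -/
noncomputable def segment (hΛ : IsKGraph Λ) (g : Λ.Mor) (u v : Fin k → ℕ) : Λ.Mor :=
  hΛ.tail (hΛ.head g v) u

theorem split_spec (hΛ : IsKGraph Λ) {g : Λ.Mor} {u : Fin k → ℕ} (h : u ≤ Λ.d g) :
    Λ.s (hΛ.head g u) = Λ.r (hΛ.tail g u) ∧ Λ.d (hΛ.head g u) = u ∧
      Λ.comp (hΛ.head g u) (hΛ.tail g u) = g := by
  obtain ⟨h1, h2, -, h4⟩ :=
    (hΛ.factor g u (Λ.d g - u) (add_tsub_cancel_of_le h).symm).choose_spec.1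
  simp only [head, tail, split, dif_pos h]
  exact ⟨h1, h2, h4⟩

theorem split_comp (hΛ : IsKGraph Λ) {A B : Λ.Mor} (h : Λ.s A = Λ.r B) :
    hΛ.split (Λ.comp A B) (Λ.d A) = (A, B) := by
  have hle : Λ.d A ≤ Λ.d (Λ.comp A B) := by
    rw [hΛ.d_comp _ _ h]
    exact le_self_add
  obtain ⟨h1, h2, h3⟩ := hΛ.split_spec hle
  obtain ⟨hA, hB⟩ := hΛ.eq_of_comp_eq h1 h h2 h3
  exact Prod.ext hA hB

theorem head_comp (hΛ : IsKGraph Λ) {A B : Λ.Mor} (h : Λ.s A = Λ.r B) :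
    hΛ.head (Λ.comp A B) (Λ.d A) = A := by
  rw [head, hΛ.split_comp h]

theorem tail_comp (hΛ : IsKGraph Λ) {A B : Λ.Mor} (h : Λ.s A = Λ.r B) :
    hΛ.tail (Λ.comp A B) (Λ.d A) = B := by
  rw [tail, hΛ.split_comp h]

theorem head_d (hΛ : IsKGraph Λ) (g : Λ.Mor) : hΛ.head g (Λ.d g) = g := by
  have := hΛ.head_comp (hΛ.r_id (Λ.s g)).symm
  rwa [hΛ.comp_id] at this

theorem head_comp_of_le (hΛ : IsKGraph Λ) {g w : Λ.Mor} {u : Fin k → ℕ}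
    (hgw : Λ.s g = Λ.r w) (hu : u ≤ Λ.d g) :
    hΛ.head (Λ.comp g w) u = hΛ.head g u := by
  obtain ⟨h1, h2, h3⟩ := hΛ.split_spec hu
  have hs : Λ.s (hΛ.tail g u) = Λ.r w := by rw [← hΛ.s_comp _ _ h1, h3, hgw]
  have key := hΛ.head_comp (B := Λ.comp (hΛ.tail g u) w) (by rw [hΛ.r_comp _ _ hs, h1])
  rwa [← hΛ.assoc _ _ _ h1 hs, h3, h2] at key

theorem head_head (hΛ : IsKGraph Λ) {g : Λ.Mor} {u v : Fin k → ℕ} (huv : u ≤ v)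
    (hv : v ≤ Λ.d g) : hΛ.head (hΛ.head g v) u = hΛ.head g u := by
  obtain ⟨h1, h2, h3⟩ := hΛ.split_spec hv
  conv_rhs => rw [← h3, hΛ.head_comp_of_le h1 (h2.symm ▸ huv)]

theorem segment_spec (hΛ : IsKGraph Λ) {g : Λ.Mor} {u v : Fin k → ℕ} (huv : u ≤ v)
    (hv : v ≤ Λ.d g) :
    Λ.s (hΛ.head g u) = Λ.r (hΛ.segment g u v) ∧ Λ.d (hΛ.segment g u v) = v - u ∧
      Λ.comp (hΛ.head g u) (hΛ.segment g u v) = hΛ.head g v := by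
  have hd := (hΛ.split_spec hv).2.1
  obtain ⟨h1, h2, h3⟩ := hΛ.split_spec (g := hΛ.head g v) (hd.symm ▸ huv)
  rw [hΛ.head_head huv hv] at h1 h2 h3
  refine ⟨h1, ?_, h3⟩
  have := (congrArg Λ.d h3).symm
  rw [hΛ.d_comp _ _ h1, hd, h2] at this
  exact eq_tsub_of_add_eq (by rw [add_comm]; exact this.symm)

theorem r_segment (hΛ : IsKGraph Λ) {g : Λ.Mor} {u v : Fin k → ℕ} (huv : u ≤ v)
    (hv : v ≤ Λ.d g) : Λ.r (hΛ.segment g u v) = Λ.s (hΛ.head g u) :=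
  (hΛ.segment_spec huv hv).1.symm

theorem s_segment (hΛ : IsKGraph Λ) {g : Λ.Mor} {u v : Fin k → ℕ} (huv : u ≤ v)
    (hv : v ≤ Λ.d g) : Λ.s (hΛ.segment g u v) = Λ.s (hΛ.head g v) := by
  obtain ⟨h1, -, h3⟩ := hΛ.segment_spec huv hv
  rw [← h3, hΛ.s_comp _ _ h1]

theorem d_segment (hΛ : IsKGraph Λ) {g : Λ.Mor} {u v : Fin k → ℕ} (huv : u ≤ v)
    (hv : v ≤ Λ.d g) : Λ.d (hΛ.segment g u v) = v - u :=
  (hΛ.segment_spec huv hv).2.1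

theorem segment_self (hΛ : IsKGraph Λ) {g : Λ.Mor} {u : Fin k → ℕ} (hu : u ≤ Λ.d g) :
    hΛ.segment g u u = Λ.idm (Λ.s (hΛ.head g u)) := by
  have key := hΛ.tail_comp (hΛ.r_id (Λ.s (hΛ.head g u))).symm
  rwa [hΛ.comp_id, (hΛ.split_spec hu).2.1] at key

theorem segment_zero (hΛ : IsKGraph Λ) (g : Λ.Mor) (v : Fin k → ℕ) :
    hΛ.segment g 0 v = hΛ.head g v := by
  have key := hΛ.tail_comp (hΛ.s_id (Λ.r (hΛ.head g v)))
  rwa [hΛ.id_comp, hΛ.d_id] at key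

theorem segment_comp_segment (hΛ : IsKGraph Λ) {g : Λ.Mor} {u v w : Fin k → ℕ}
    (huv : u ≤ v) (hvw : v ≤ w) (hw : w ≤ Λ.d g) :
    Λ.comp (hΛ.segment g u v) (hΛ.segment g v w) = hΛ.segment g u w := by
  have hv := hvw.trans hw
  obtain ⟨hu1, hu2, hu3⟩ := hΛ.segment_spec huv hv
  obtain ⟨hv1, -, hv3⟩ := hΛ.segment_spec hvw hw
  obtain ⟨hw1, -, hw3⟩ := hΛ.segment_spec (huv.trans hvw) hw
  have hmid : Λ.s (hΛ.segment g u v) = Λ.r (hΛ.segment g v w) := by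
    rw [hΛ.s_segment huv hv, hv1]
  refine (hΛ.eq_of_comp_eq (by rw [hΛ.r_comp _ _ hmid, hu1]) hw1 rfl ?_).2
  rw [← hΛ.assoc _ _ _ hu1 hmid, hu3, hv3, hw3]

theorem segment_comp_right (hΛ : IsKGraph Λ) {A B : Λ.Mor} (h : Λ.s A = Λ.r B) :
    hΛ.segment (Λ.comp A B) (Λ.d A) (Λ.d A + Λ.d B) = B := by
  rw [segment, ← hΛ.d_comp _ _ h, hΛ.head_d, hΛ.tail_comp h]

theorem segment_comp_of_le (hΛ : IsKGraph Λ) {g w : Λ.Mor} {u v : Fin k → ℕ}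
    (hgw : Λ.s g = Λ.r w) (hv : v ≤ Λ.d g) :
    hΛ.segment (Λ.comp g w) u v = hΛ.segment g u v := by
  rw [segment, hΛ.head_comp_of_le hgw hv, segment]

end IsKGraph

namespace BPath

variable {k : ℕ} {Λ : KGraphData k}

/-- The morphism `(λx)(0, T)`, meaningful for `d λ ≤ T ≤ d λ + d x`. -/
def concatMor (lam : Λ.Mor) (x : BPath k Λ) (T : Fin k → ℕ) : Λ.Mor :=
  Λ.comp lam (x.seg 0 (T - Λ.d lam))

section Concat

variable {lam : Λ.Mor} {x : BPath k Λ}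

theorem s_eq_r_seg (hx : x.vert 0 = Λ.s lam) {T : Fin k → ℕ}
    (hT : leDeg k (T - Λ.d lam) x.deg) : Λ.s lam = Λ.r (x.seg 0 (T - Λ.d lam)) := by
  rw [x.seg_r 0 _ zero_le hT, hx]

theorem d_concatMor (hΛ : IsKGraph Λ) (hx : x.vert 0 = Λ.s lam) {T : Fin k → ℕ}
    (hnT : Λ.d lam ≤ T) (hT : leDeg k (T - Λ.d lam) x.deg) :
    Λ.d (concatMor lam x T) = T := by
  rw [concatMor, hΛ.d_comp _ _ (s_eq_r_seg hx hT), x.seg_deg 0 _ zero_le hT, tsub_zero,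
    add_tsub_cancel_of_le hnT]

theorem s_concatMor (hΛ : IsKGraph Λ) (hx : x.vert 0 = Λ.s lam) {T : Fin k → ℕ}
    (hT : leDeg k (T - Λ.d lam) x.deg) :
    Λ.s (concatMor lam x T) = x.vert (T - Λ.d lam) := by
  rw [concatMor, hΛ.s_comp _ _ (s_eq_r_seg hx hT), x.seg_s 0 _ zero_le hT]

theorem concatMor_eq_comp (hΛ : IsKGraph Λ) (hx : x.vert 0 = Λ.s lam) {T T' : Fin k → ℕ}
    (hTT' : T ≤ T') (hT' : leDeg k (T' - Λ.d lam) x.deg) :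
    Λ.s (concatMor lam x T) = Λ.r (x.seg (T - Λ.d lam) (T' - Λ.d lam)) ∧
      concatMor lam x T' =
        Λ.comp (concatMor lam x T) (x.seg (T - Λ.d lam) (T' - Λ.d lam)) := by
  have hle : T - Λ.d lam ≤ T' - Λ.d lam := tsub_le_tsub_right hTT' _
  have hT := leDeg_of_le hle hT'
  have hmid : Λ.s (x.seg 0 (T - Λ.d lam)) = Λ.r (x.seg (T - Λ.d lam) (T' - Λ.d lam)) := by
    rw [x.seg_s 0 _ zero_le hT, x.seg_r _ _ hle hT']
  refine ⟨by rw [concatMor, hΛ.s_comp _ _ (s_eq_r_seg hx hT), hmid], ?_⟩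
  rw [concatMor, concatMor, hΛ.assoc _ _ _ (s_eq_r_seg hx hT) hmid,
    x.seg_comp 0 _ _ zero_le hle hT']

theorem d_concatMor_sup (hΛ : IsKGraph Λ) (hx : x.vert 0 = Λ.s lam) {t : Fin k → ℕ}
    (ht : leDeg k (t - Λ.d lam) x.deg) :
    Λ.d (concatMor lam x (t ⊔ Λ.d lam)) = t ⊔ Λ.d lam :=
  d_concatMor hΛ hx le_sup_right (by rwa [sup_tsub_right])

theorem head_concatMor_sup (hΛ : IsKGraph Λ) (hx : x.vert 0 = Λ.s lam) {p t : Fin k → ℕ}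
    (hpt : p ≤ t) (ht : leDeg k (t - Λ.d lam) x.deg) :
    hΛ.head (concatMor lam x (t ⊔ Λ.d lam)) p = hΛ.head (concatMor lam x (p ⊔ Λ.d lam)) p := by
  have hp := leDeg_of_le (tsub_le_tsub_right hpt _) ht
  obtain ⟨hs, heq⟩ := concatMor_eq_comp hΛ hx (sup_le_sup_right hpt (Λ.d lam))
    (by rwa [sup_tsub_right])
  rw [heq, hΛ.head_comp_of_le hs (by rw [d_concatMor_sup hΛ hx hp]; exact le_sup_left)]

theorem segment_concatMor_sup (hΛ : IsKGraph Λ) (hx : x.vert 0 = Λ.s lam)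
    {p t t' : Fin k → ℕ} (htt' : t ≤ t') (ht' : leDeg k (t' - Λ.d lam) x.deg) :
    hΛ.segment (concatMor lam x (t' ⊔ Λ.d lam)) p t =
      hΛ.segment (concatMor lam x (t ⊔ Λ.d lam)) p t := by
  have ht := leDeg_of_le (tsub_le_tsub_right htt' _) ht'
  obtain ⟨hs, heq⟩ := concatMor_eq_comp hΛ hx (sup_le_sup_right htt' (Λ.d lam))
    (by rwa [sup_tsub_right])
  rw [heq, hΛ.segment_comp_of_le hs (by rw [d_concatMor_sup hΛ hx ht]; exact le_sup_left)]

/-- The vertex `(λx)(p)`. -/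
noncomputable def concatVert (hΛ : IsKGraph Λ) (lam : Λ.Mor) (x : BPath k Λ)
    (p : Fin k → ℕ) : Λ.Obj :=
  Λ.s (hΛ.head (concatMor lam x (p ⊔ Λ.d lam)) p)

/-- The segment `(λx)(p, t)`. -/
noncomputable def concatSeg (hΛ : IsKGraph Λ) (lam : Λ.Mor) (x : BPath k Λ)
    (p t : Fin k → ℕ) : Λ.Mor :=
  hΛ.segment (concatMor lam x (t ⊔ Λ.d lam)) p t

theorem concatVert_of_le (hΛ : IsKGraph Λ) (hx : x.vert 0 = Λ.s lam) {t : Fin k → ℕ}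
    (hnt : Λ.d lam ≤ t) (ht : leDeg k (t - Λ.d lam) x.deg) :
    concatVert hΛ lam x t = x.vert (t - Λ.d lam) := by
  have h := hΛ.head_d (concatMor lam x t)
  rw [d_concatMor hΛ hx hnt ht] at h
  rw [concatVert, sup_eq_left.mpr hnt, h, s_concatMor hΛ hx ht]

theorem r_concatSeg (hΛ : IsKGraph Λ) (hx : x.vert 0 = Λ.s lam) {p t : Fin k → ℕ}
    (hpt : p ≤ t) (ht : leDeg k (t - Λ.d lam) x.deg) :
    Λ.r (concatSeg hΛ lam x p t) = concatVert hΛ lam x p := by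
  rw [concatSeg, hΛ.r_segment hpt (by rw [d_concatMor_sup hΛ hx ht]; exact le_sup_left),
    head_concatMor_sup hΛ hx hpt ht, concatVert]

theorem s_concatSeg (hΛ : IsKGraph Λ) (hx : x.vert 0 = Λ.s lam) {p t : Fin k → ℕ}
    (hpt : p ≤ t) (ht : leDeg k (t - Λ.d lam) x.deg) :
    Λ.s (concatSeg hΛ lam x p t) = concatVert hΛ lam x t :=
  hΛ.s_segment hpt (by rw [d_concatMor_sup hΛ hx ht]; exact le_sup_left)

theorem d_concatSeg (hΛ : IsKGraph Λ) (hx : x.vert 0 = Λ.s lam) {p t : Fin k → ℕ}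
    (hpt : p ≤ t) (ht : leDeg k (t - Λ.d lam) x.deg) :
    Λ.d (concatSeg hΛ lam x p t) = t - p :=
  hΛ.d_segment hpt (by rw [d_concatMor_sup hΛ hx ht]; exact le_sup_left)

theorem concatSeg_self (hΛ : IsKGraph Λ) (hx : x.vert 0 = Λ.s lam) {p : Fin k → ℕ}
    (hp : leDeg k (p - Λ.d lam) x.deg) :
    concatSeg hΛ lam x p p = Λ.idm (concatVert hΛ lam x p) :=
  hΛ.segment_self (by rw [d_concatMor_sup hΛ hx hp]; exact le_sup_left)

theorem concatSeg_comp (hΛ : IsKGraph Λ) (hx : x.vert 0 = Λ.s lam) {p q t : Fin k → ℕ}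
    (hpq : p ≤ q) (hqt : q ≤ t) (ht : leDeg k (t - Λ.d lam) x.deg) :
    Λ.comp (concatSeg hΛ lam x p q) (concatSeg hΛ lam x q t) = concatSeg hΛ lam x p t := by
  rw [concatSeg, ← segment_concatMor_sup hΛ hx hqt ht]
  exact hΛ.segment_comp_segment hpq hqt (by rw [d_concatMor_sup hΛ hx ht]; exact le_sup_left)

theorem not_hasEdge_concatVert (hΛ : IsKGraph Λ) (hlc : LocallyConvex Λ)
    (hx : x.vert 0 = Λ.s lam) {p : Fin k → ℕ} {i : Fin k}
    (hp : leDeg k (p - Λ.d lam) x.deg) (hpi : (p i : ℕ∞) = Λ.d lam i + x.deg i) :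
    ¬ Λ.HasEdge (concatVert hΛ lam x p) i := by
  intro he
  have hni : Λ.d lam i ≤ p i := by exact_mod_cast (le_self_add.trans hpi.ge)
  have hp' : leDeg k ((p ⊔ Λ.d lam) - Λ.d lam) x.deg := by rwa [sup_tsub_right]
  have hμi : Λ.d (concatSeg hΛ lam x p (p ⊔ Λ.d lam)) i = 0 := by
    rw [d_concatSeg hΛ hx le_sup_left hp']
    simp [hni]
  rw [← r_concatSeg hΛ hx le_sup_left hp'] at he
  obtain ⟨e, her, hed⟩ := hΛ.hasEdge_s_of_hasEdge_r hlc hμi he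
  rw [s_concatSeg hΛ hx le_sup_left hp', concatVert_of_le hΛ hx le_sup_right hp',
    sup_tsub_right] at her
  refine x.boundary _ i hp ?_ e her hed
  rw [Pi.sub_apply, ENat.natCast_sub, hpi, (ENat.addLECancellable_natCast _).add_tsub_cancel_left]

noncomputable def concat (hΛ : IsKGraph Λ) (hlc : LocallyConvex Λ)
    (hx : x.vert 0 = Λ.s lam) : BPath k Λ where
  deg := fun i => (Λ.d lam i : ℕ∞) + x.deg i
  vert := concatVert hΛ lam x
  seg := concatSeg hΛ lam x
  seg_r _ _ hpt ht := r_concatSeg hΛ hx hpt (leDeg_sub_iff.mpr ht)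
  seg_s _ _ hpt ht := s_concatSeg hΛ hx hpt (leDeg_sub_iff.mpr ht)
  seg_deg _ _ hpt ht := d_concatSeg hΛ hx hpt (leDeg_sub_iff.mpr ht)
  seg_id _ hp := concatSeg_self hΛ hx (leDeg_sub_iff.mpr hp)
  seg_comp _ _ _ hpq hqt ht := concatSeg_comp hΛ hx hpq hqt (leDeg_sub_iff.mpr ht)
  boundary _ _ hp hpi e he hed :=
    not_hasEdge_concatVert hΛ hlc hx (leDeg_sub_iff.mpr hp) hpi ⟨e, he, hed⟩

theorem isConcat_concat (hΛ : IsKGraph Λ) (hlc : LocallyConvex Λ)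
    (hx : x.vert 0 = Λ.s lam) : IsConcat Λ lam x (concat hΛ hlc hx) := by
  refine ⟨rfl, ?_, fun p hp => ?_⟩
  · show concatSeg hΛ lam x 0 (Λ.d lam) = lam
    rw [concatSeg, sup_idem, hΛ.segment_zero, concatMor, tsub_self,
      x.seg_id 0 (fun _ => zero_le), hx, hΛ.comp_id, hΛ.head_d]
  · show concatSeg hΛ lam x (Λ.d lam) (Λ.d lam + p) = x.seg 0 p
    have hs : Λ.s lam = Λ.r (x.seg 0 p) := by rw [x.seg_r 0 p zero_le hp, hx]
    have key := hΛ.segment_comp_right hs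
    rw [x.seg_deg 0 p zero_le hp, tsub_zero] at key
    rwa [concatSeg, sup_eq_left.mpr le_self_add, concatMor, add_tsub_cancel_left]

theorem concat_vert_d (hΛ : IsKGraph Λ) (hlc : LocallyConvex Λ) (hx : x.vert 0 = Λ.s lam) :
    (concat hΛ hlc hx).vert (Λ.d lam) = Λ.s lam := by
  show concatVert hΛ lam x (Λ.d lam) = Λ.s lam
  rw [concatVert_of_le hΛ hx le_rfl (by rw [tsub_self]; exact fun _ => zero_le), tsub_self, hx]

end Concat

theorem deg_eq_zero_of_not_hasEdge (x : BPath k Λ) {i : Fin k}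
    (h : ¬ Λ.HasEdge (x.vert 0) i) : x.deg i = 0 := by
  by_contra hi
  have hle : leDeg k (Pi.single i 1) x.deg := by
    intro j
    rcases eq_or_ne j i with rfl | hj
    · simpa [Order.one_le_iff_ne_zero] using hi
    · simp [hj]
  refine h ⟨x.seg 0 (Pi.single i 1), x.seg_r 0 _ zero_le hle, ?_⟩
  rw [x.seg_deg 0 _ zero_le hle, tsub_zero]

end BPath

theorem extend_boundary_path_general (k : ℕ) (Λ : KGraphData k)
    (hΛ : IsKGraph Λ) (hlc : LocallyConvex Λ)
    (y : BPath k Λ) (q : Fin k → ℕ)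
    (hq : ∀ i : Fin k, y.deg i ≠ ⊤ →
      ∀ e : Λ.Mor, Λ.r e = y.vert (wedge q y.deg) → Λ.d e ≠ Pi.single i 1)
    (z : BPath k Λ) (hz : z.vert 0 = y.vert (wedge q y.deg)) :
    ∃ y' : BPath k Λ, IsConcat Λ (y.seg 0 (wedge q y.deg)) z y' ∧
      wedge q y'.deg = wedge q y.deg ∧ VRel (y', q) (y, q) := by
  set n := wedge q y.deg
  have hn : leDeg k n y.deg := wedge_leDeg q y.deg
  have hs : Λ.s (y.seg 0 n) = y.vert n := y.seg_s 0 n zero_le hn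
  have hd : Λ.d (y.seg 0 n) = n := by rw [y.seg_deg 0 n zero_le hn, tsub_zero]
  have hzy : z.vert 0 = Λ.s (y.seg 0 n) := hz.trans hs.symm
  have hz0 : ∀ i, y.deg i ≠ ⊤ → z.deg i = 0 := fun i hi =>
    z.deg_eq_zero_of_not_hasEdge fun ⟨e, her, hed⟩ => hq i hi e (her.trans hz) hed
  have hdeg : wedge q (BPath.concat hΛ hlc hzy).deg = n := by
    simpa only [BPath.concat, hd] using wedge_add_eq_wedge q hz0
  refine ⟨BPath.concat hΛ hlc hzy, BPath.isConcat_concat hΛ hlc hzy, hdeg, ?_, ?_⟩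
  · show (BPath.concat hΛ hlc hzy).vert (wedge q _) = y.vert n
    have hv := BPath.concat_vert_d hΛ hlc hzy
    rw [hd] at hv
    rw [hdeg, hv, hs]
  · show q - wedge q (BPath.concat hΛ hlc hzy).deg = q - n
    rw [hdeg]

/-- Let `y ∈ Λ^{≤∞}` and `q ∈ ℕ^k` be such that
`y(q∧d(y))Λ^{e_i} = ∅` whenever `d(y)_i < ∞`. Then for every boundary path
`z ∈ y(q∧d(y))Λ^{≤∞}`, the concatenation `y' := y(0, q∧d(y)) z` is a boundary
path with `q ∧ d(y') = q ∧ d(y)` (hence `(y';q) ∼ (y;q)`). -/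
theorem extend_boundary_path (k : ℕ) (hk : 1 ≤ k) (Λ : KGraphData k)
    (hΛ : IsKGraph Λ) (hrf : RowFinite Λ) (hlc : LocallyConvex Λ)
    (y : BPath k Λ) (q : Fin k → ℕ)
    (hq : ∀ i : Fin k, y.deg i ≠ ⊤ →
      ∀ e : Λ.Mor, Λ.r e = y.vert (wedge q y.deg) → Λ.d e ≠ Pi.single i 1)
    (z : BPath k Λ) (hz : z.vert 0 = y.vert (wedge q y.deg)) :
    ∃ y' : BPath k Λ, IsConcat Λ (y.seg 0 (wedge q y.deg)) z y' ∧
      wedge q y'.deg = wedge q y.deg ∧ VRel (y', q) (y, q) :=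
  extend_boundary_path_general k Λ hΛ hlc y q hq z hz
end

section
/- Let Λ be a row-finite, locally convex k-graph. Suppose Λ has local periodicity m, n at v ∈ Λ^0 (m ≠ n ∈ ℕ^k), let x ∈ vΛ^{≤∞}, and let z := μαy where μ := x(0, m∧d(x)), α := x(m∧d(x), (m∨n)∧d(x)), and y ∈ s(α)Λ^{≤∞} is any boundary path. Then m ∧ d(z) = m ∧ d(x) and n ∧ d(z) = n ∧ d(x). -/
open scoped ENat

/-!
Write `c := m ∨ n` and `w := c ∧ d(x)`, so that `μα = x(0, w)` and `d(z) = w + d(y)`.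
In a coordinate `i` with `d(x)_i ≤ c_i` the path `x` stops at `x(w)` in direction `i`, so by the
boundary condition `x(w) = r(y)` receives no edge of degree `e_i` and `d(y)_i = 0`; hence
`d(z)_i = d(x)_i`. In every other coordinate both `d(x)_i` and `d(z)_i` are at least `c_i`.
Either way `a ∧ d(z) = a ∧ d(x)` for every `a ≤ c`, in particular for `a = m` and `a = n`.
-/

lemma ENat.inf_inf_add_of_le {a c d e : ℕ∞} (hac : a ≤ c) (he : d ≤ c → e = 0) :
    a ⊓ (c ⊓ d + e) = a ⊓ d := by
  rcases le_or_gt a d with had | hda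
  · rw [inf_eq_left.mpr had, inf_eq_left.mpr ((le_inf hac had).trans le_self_add)]
  · rw [he (hda.le.trans hac), add_zero, inf_eq_right.mpr (hda.le.trans hac)]

lemma wedge_mono_left {k : ℕ} {a b : Fin k → ℕ} (hab : a ≤ b) (D : Fin k → ℕ∞) :
    wedge a D ≤ wedge b D := fun i => by
  have : ((wedge a D i : ℕ) : ℕ∞) ≤ wedge b D i := by
    rw [wedge_coe, wedge_coe]
    exact inf_le_inf_right _ (by exact_mod_cast hab i)
  exact_mod_cast this

namespace BPath

variable {k : ℕ} {Λ : KGraphData k}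

lemma deg_eq_zero_of_vert_zero_eq_s15 (x y : BPath k Λ) {p : Fin k → ℕ} {i : Fin k}
    (hp : leDeg k p x.deg) (hpi : (p i : ℕ∞) = x.deg i) (hy : y.vert 0 = x.vert p) :
    y.deg i = 0 := by
  by_contra hne
  have hstep : leDeg k (Pi.single i 1) y.deg := by
    intro j
    by_cases hj : j = i
    · subst hj
      simpa using Order.one_le_iff_ne_zero.mpr hne
    · simp [hj]
  have h0 : (0 : Fin k → ℕ) ≤ Pi.single i 1 := fun _ => Nat.zero_le _
  refine x.boundary p i hp hpi (y.seg 0 (Pi.single i 1)) ?_ ?_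
  · rw [y.seg_r 0 _ h0 hstep, hy]
  · rw [y.seg_deg 0 _ h0 hstep, tsub_zero]

lemma wedge_deg_of_isConcat_seg (x y z : BPath k Λ) {a c : Fin k → ℕ} (hac : a ≤ c)
    (hy : y.vert 0 = x.vert (wedge c x.deg))
    (hz : IsConcat Λ (x.seg 0 (wedge c x.deg)) y z) :
    wedge a z.deg = wedge a x.deg := by
  have hw := wedge_leDeg c x.deg
  have hzdeg : ∀ i, z.deg i = ((c i : ℕ∞) ⊓ x.deg i) + y.deg i := fun i => by
    rw [hz.1, x.seg_deg 0 _ (fun _ => Nat.zero_le _) hw, tsub_zero]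
    exact congrArg (· + y.deg i) (wedge_coe c x.deg i)
  funext i
  have hwedge : (a i : ℕ∞) ⊓ z.deg i = (a i : ℕ∞) ⊓ x.deg i := by
    rw [hzdeg i]
    refine ENat.inf_inf_add_of_le (by exact_mod_cast hac i) fun hxc => ?_
    exact x.deg_eq_zero_of_vert_zero_eq_s15 y hw (by rw [wedge_coe, inf_eq_right.mpr hxc]) hy
  simp only [wedge, hwedge]

end BPath

theorem wedge_deg_concat_general (k : ℕ) (Λ : KGraphData k)
    (m n : Fin k → ℕ)
    (x : BPath k Λ)
    (y : BPath k Λ)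
    (hy : y.vert 0 = Λ.s (x.seg (wedge m x.deg) (wedge (m ⊔ n) x.deg)))
    (z : BPath k Λ)
    (hz : IsConcat Λ
      (Λ.comp (x.seg 0 (wedge m x.deg))
        (x.seg (wedge m x.deg) (wedge (m ⊔ n) x.deg))) y z) :
    wedge m z.deg = wedge m x.deg ∧ wedge n z.deg = wedge n x.deg := by
  have hw := wedge_leDeg (m ⊔ n) x.deg
  have hmw : wedge m x.deg ≤ wedge (m ⊔ n) x.deg := wedge_mono_left le_sup_left x.deg
  rw [x.seg_s _ _ hmw hw] at hy
  rw [x.seg_comp 0 _ _ (fun _ => Nat.zero_le _) hmw hw] at hz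
  exact ⟨x.wedge_deg_of_isConcat_seg y z le_sup_left hy hz,
    x.wedge_deg_of_isConcat_seg y z le_sup_right hy hz⟩

/-- Suppose `Λ` has local periodicity `m, n` at `v` (`m ≠ n`),
`x ∈ vΛ^{≤∞}`, and `z := μαy` where `μ := x(0, m∧d(x))`,
`α := x(m∧d(x), (m∨n)∧d(x))` and `y ∈ s(α)Λ^{≤∞}`. Then
`m ∧ d(z) = m ∧ d(x)` and `n ∧ d(z) = n ∧ d(x)`. -/
theorem wedge_deg_concat (k : ℕ) (hk : 1 ≤ k) (Λ : KGraphData k)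
    (hΛ : IsKGraph Λ) (hrf : RowFinite Λ) (hlc : LocallyConvex Λ)
    (v : Λ.Obj) (m n : Fin k → ℕ) (hmn : m ≠ n)
    (hlp : LocalPeriodicity Λ m n v) (x : BPath k Λ) (hx : x.vert 0 = v)
    (y : BPath k Λ)
    (hy : y.vert 0 = Λ.s (x.seg (wedge m x.deg) (wedge (m ⊔ n) x.deg)))
    (z : BPath k Λ)
    (hz : IsConcat Λ
      (Λ.comp (x.seg 0 (wedge m x.deg))
        (x.seg (wedge m x.deg) (wedge (m ⊔ n) x.deg))) y z) :
    wedge m z.deg = wedge m x.deg ∧ wedge n z.deg = wedge n x.deg :=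
  wedge_deg_concat_general k Λ m n x y hy z hz
end
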